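/- Let f be a polynomial of degree at most d in n real variables and let f̄(y) = f(y_1,…,y_n) for y ∈ ℝ^{n+1} (f̄ is f viewed as a polynomial in n+1 variables, obtained by zero-padding each homogeneous component's coefficient tensor). If min f(x) over x ∈ F and min f̄(y) over y ∈ F̄ both have optimal solutions, then they share the same optimal value. -/

import Mathlib

open Finset Matrix Pointwise

noncomputable section

/-- An order-`d`, dimension-`n` real tensor: entries indexed by `Fin d → Fin n`. -/
abbrev Tensor (d n : ℕ) : Type := (Fin d → Fin n) → ℝ

/-- Entrywise inner product of two tensors. -/
def tInner {d n : ℕ} (A B : Tensor d n) : ℝ := ∑ i : Fin d → Fin n, A i * B i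

/-- `Md d x` is the `d`-fold symmetric outer product of the vector `x`. -/
def Md {n : ℕ} (d : ℕ) (x : Fin n → ℝ) : Tensor d n := fun i => ∏ t, x (i t)

/-- A tensor is symmetric if its entries are invariant under permutations of the indices. -/
def IsSymT {d n : ℕ} (A : Tensor d n) : Prop :=
  ∀ (σ : Equiv.Perm (Fin d)) (i : Fin d → Fin n), A (i ∘ σ) = A i

/-- The recession cone of a set `F`. -/
def recCone {n : ℕ} (F : Set (Fin n → ℝ)) : Set (Fin n → ℝ) :=
  {y | ∀ x ∈ F, ∀ lam : ℝ, 0 ≤ lam → x + lam • y ∈ F}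

/-- Mode product `X ×₁ D ×₂ D ⋯ ×_d D` of a tensor with the matrix `D` on every mode. -/
def modeProd {d n p : ℕ} (X : Tensor d n) (D : Matrix (Fin p) (Fin n) ℝ) : Tensor d p :=
  fun i => ∑ j : Fin d → Fin n, X j * ∏ t, D (i t) (j t)

/-- The cone of completely positive tensors of order `d` and dimension `n`. -/
def CP (d n : ℕ) : Set (Tensor d n) :=
  {X | ∃ (k : ℕ) (y : Fin k → (Fin n → ℝ)), (∀ i j, 0 ≤ y i j) ∧ X = ∑ i, Md d (y i)}

/-- A tensor is copositive if `A x^d ≥ 0` for all entrywise nonnegative `x`. -/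
def Copos {d n : ℕ} (A : Tensor d n) : Prop :=
  ∀ x : Fin n → ℝ, (∀ j, 0 ≤ x j) → 0 ≤ tInner A (Md d x)

/-- The subtensor of `X` obtained by restricting all indices to the last `n` coordinates. -/
def restr {d n : ℕ} (X : Tensor d (n+1)) : Tensor d n :=
  fun i => X (fun t => Fin.succ (i t))

/-! The truncation `y ↦ (y₁, …, yₙ)` maps `F̄` into `F`, and the lift `x ↦ (x, 1 - αᵀx)` maps `F`
into `F̄`: the slack is nonnegative exactly because `αᵀx ≤ 1` on `F`, and it makes `aᵀy = 1`. Both maps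
leave the objective unchanged, since `f̄` only reads the first `n` coordinates, so each optimal value
bounds the other. -/

theorem Fin.snoc_dotProduct {R : Type*} [NonUnitalNonAssocSemiring R] {n : ℕ}
    (u : Fin n → R) (c : R) (y : Fin (n + 1) → R) :
    (Fin.snoc u c : Fin (n + 1) → R) ⬝ᵥ y = u ⬝ᵥ Fin.init y + c * y (Fin.last n) := by
  simp [dotProduct, Fin.sum_univ_castSucc, Fin.init]

theorem Fin.snoc_one_dotProduct_snoc {n : ℕ} (u x : Fin n → ℝ) (t : ℝ) :
    (Fin.snoc u 1 : Fin (n + 1) → ℝ) ⬝ᵥ Fin.snoc x t = u ⬝ᵥ x + t := by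
  rw [Fin.snoc_dotProduct, Fin.init_snoc, Fin.snoc_last, one_mul]

section Homogenization

variable {m n : ℕ} {B : Matrix (Fin m) (Fin n) ℝ} {b : Fin m → ℝ} {a : Fin (n + 1) → ℝ}
  {A : Matrix (Fin (m + (n + 1))) (Fin (n + 1)) ℝ}

def polyhedron (B : Matrix (Fin m) (Fin n) ℝ) (b : Fin m → ℝ) : Set (Fin n → ℝ) :=
  {x | (∀ i, (B *ᵥ x) i ≤ b i) ∧ ∀ j, 0 ≤ x j}

def homogenizedPolyhedron (A : Matrix (Fin (m + (n + 1))) (Fin (n + 1)) ℝ)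
    (a : Fin (n + 1) → ℝ) : Set (Fin (n + 1) → ℝ) :=
  {y | (∀ i, 0 ≤ (A *ᵥ y) i) ∧ a ⬝ᵥ y = 1}

theorem mulVec_castAdd_of_rows
    (hA : ∀ (i : Fin m) (j : Fin (n + 1)),
      A (Fin.castAdd (n + 1) i) j = b i * a j - (Fin.snoc (B i) 0 : Fin (n + 1) → ℝ) j)
    (y : Fin (n + 1) → ℝ) (i : Fin m) :
    (A *ᵥ y) (Fin.castAdd (n + 1) i) = b i * (a ⬝ᵥ y) - (B *ᵥ Fin.init y) i := by
  have hrow : A (Fin.castAdd (n + 1) i) = b i • a - Fin.snoc (B i) 0 := funext (hA i)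
  change A (Fin.castAdd (n + 1) i) ⬝ᵥ y = b i * (a ⬝ᵥ y) - B i ⬝ᵥ Fin.init y
  rw [hrow, sub_dotProduct, smul_dotProduct, Fin.snoc_dotProduct, zero_mul, add_zero,
    smul_eq_mul]

theorem mulVec_natAdd_of_rows
    (hA : ∀ (i j : Fin (n + 1)), A (Fin.natAdd m i) j = if i = j then 1 else 0)
    (y : Fin (n + 1) → ℝ) (i : Fin (n + 1)) :
    (A *ᵥ y) (Fin.natAdd m i) = y i := by
  simp [mulVec, dotProduct, hA]

theorem init_mem_polyhedron
    (hA1 : ∀ (i : Fin m) (j : Fin (n + 1)),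
      A (Fin.castAdd (n + 1) i) j = b i * a j - (Fin.snoc (B i) 0 : Fin (n + 1) → ℝ) j)
    (hA2 : ∀ (i j : Fin (n + 1)), A (Fin.natAdd m i) j = if i = j then 1 else 0)
    {y : Fin (n + 1) → ℝ} (hy : y ∈ homogenizedPolyhedron A a) :
    Fin.init y ∈ polyhedron B b := by
  refine ⟨fun i => ?_, fun j => ?_⟩
  · have h := hy.1 (Fin.castAdd (n + 1) i)
    rwa [mulVec_castAdd_of_rows hA1, hy.2, mul_one, sub_nonneg] at h
  · simpa only [mulVec_natAdd_of_rows hA2, Fin.init] using hy.1 (Fin.natAdd m (Fin.castSucc j))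

theorem snoc_slack_mem_homogenizedPolyhedron {al : Fin n → ℝ}
    (hA1 : ∀ (i : Fin m) (j : Fin (n + 1)), A (Fin.castAdd (n + 1) i) j
      = b i * (Fin.snoc al 1 : Fin (n + 1) → ℝ) j - (Fin.snoc (B i) 0 : Fin (n + 1) → ℝ) j)
    (hA2 : ∀ (i j : Fin (n + 1)), A (Fin.natAdd m i) j = if i = j then 1 else 0)
    {x : Fin n → ℝ} (hx : x ∈ polyhedron B b) (hal : al ⬝ᵥ x ≤ 1) :
    Fin.snoc x (1 - al ⬝ᵥ x) ∈ homogenizedPolyhedron A (Fin.snoc al 1) := by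
  have hdot : (Fin.snoc al 1 : Fin (n + 1) → ℝ) ⬝ᵥ Fin.snoc x (1 - al ⬝ᵥ x) = 1 := by
    rw [Fin.snoc_one_dotProduct_snoc]; ring
  refine ⟨fun i => ?_, hdot⟩
  induction i using Fin.addCases with
  | left i =>
    rw [mulVec_castAdd_of_rows hA1, hdot, Fin.init_snoc, mul_one, sub_nonneg]
    exact hx.1 i
  | right i =>
    rw [mulVec_natAdd_of_rows hA2]
    induction i using Fin.lastCases with
    | last => rw [Fin.snoc_last]; linarith
    | cast j => rw [Fin.snoc_castSucc]; exact hx.2 j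

end Homogenization

theorem inhomogeneous_same_value_general
{m n : ℕ} (B : Matrix (Fin m) (Fin n) ℝ) (b : Fin m → ℝ)
    (F : Set (Fin n → ℝ))
    (hF : F = {x | (∀ i, B.mulVec x i ≤ b i) ∧ ∀ j, 0 ≤ x j})
    (al : Fin n → ℝ) (halF : ∀ x ∈ F, al ⬝ᵥ x ≤ 1)
    (a : Fin (n+1) → ℝ) (ha : a = Fin.snoc al 1)
    (A : Matrix (Fin (m + (n+1))) (Fin (n+1)) ℝ)
    (hA1 : ∀ (i : Fin m) (j : Fin (n+1)),
      A (Fin.castAdd (n+1) i) j = b i * a j - (Fin.snoc (B i) 0 : Fin (n+1) → ℝ) j)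
    (hA2 : ∀ (i j : Fin (n+1)), A (Fin.natAdd m i) j = if i = j then 1 else 0)
    (Fb : Set (Fin (n+1) → ℝ))
    (hFb : Fb = {y | (∀ i, 0 ≤ A.mulVec y i) ∧ a ⬝ᵥ y = 1})
    (f : (Fin n → ℝ) → ℝ)
    (fb : (Fin (n+1) → ℝ) → ℝ)
    (hfb : ∀ y, fb y = f (fun i => y (Fin.castSucc i)))
    (xbar : Fin n → ℝ) (hx : xbar ∈ F) (hxopt : ∀ x ∈ F, f xbar ≤ f x)
    (ybar : Fin (n+1) → ℝ) (hy : ybar ∈ Fb) (hyopt : ∀ y ∈ Fb, fb ybar ≤ fb y) :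
    f xbar = fb ybar := by
  subst ha hFb hF
  have hlift := snoc_slack_mem_homogenizedPolyhedron hA1 hA2 hx (halF xbar hx)
  refine le_antisymm ?_ ?_
  · rw [hfb]
    exact hxopt _ (init_mem_polyhedron hA1 hA2 hy)
  · simpa [hfb] using hyopt _ hlift

/-- The inhomogeneous POP over `F` and the problem for
`f̄(y) = f(y₁,…,yₙ)` over `F̄` share the same optimal value. -/
theorem inhomogeneous_same_value {d : ℕ}
{m n : ℕ} (B : Matrix (Fin m) (Fin n) ℝ) (b : Fin m → ℝ)
    (F : Set (Fin n → ℝ))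
    (hF : F = {x | (∀ i, B.mulVec x i ≤ b i) ∧ ∀ j, 0 ≤ x j})
    (al : Fin n → ℝ) (hal : ∀ j, 0 ≤ al j) (halF : ∀ x ∈ F, al ⬝ᵥ x ≤ 1)
    (a : Fin (n+1) → ℝ) (ha : a = Fin.snoc al 1)
    (A : Matrix (Fin (m + (n+1))) (Fin (n+1)) ℝ)
    (hA1 : ∀ (i : Fin m) (j : Fin (n+1)),
      A (Fin.castAdd (n+1) i) j = b i * a j - (Fin.snoc (B i) 0 : Fin (n+1) → ℝ) j)
    (hA2 : ∀ (i j : Fin (n+1)), A (Fin.natAdd m i) j = if i = j then 1 else 0)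
    (Fb : Set (Fin (n+1) → ℝ))
    (hFb : Fb = {y | (∀ i, 0 ≤ A.mulVec y i) ∧ a ⬝ᵥ y = 1})
    (Af : Tensor d (n+1)) (hsym : IsSymT Af)
    (f : (Fin n → ℝ) → ℝ)
    (hf : ∀ x, f x = tInner Af (Md d (Fin.cons 1 x)))
    (fb : (Fin (n+1) → ℝ) → ℝ)
    (hfb : ∀ y, fb y = f (fun i => y (Fin.castSucc i)))
    (xbar : Fin n → ℝ) (hx : xbar ∈ F) (hxopt : ∀ x ∈ F, f xbar ≤ f x)
    (ybar : Fin (n+1) → ℝ) (hy : ybar ∈ Fb) (hyopt : ∀ y ∈ Fb, fb ybar ≤ fb y) :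
    f xbar = fb ybar :=
  inhomogeneous_same_value_general B b F hF al halF a ha A hA1 hA2 Fb hFb f fb hfb xbar hx hxopt
    ybar hy hyopt
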